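/- With γ_θ the geodesic of curvature λ from p=(1,0,0,0) with initial velocity cos(θ)E1(p)+sin(θ)E2(p), the x1 and y1 coordinates of γ_θ(s) are independent of θ: x1(s)=cos(λs)cos(√(1+λ²)s)+(λ/√(1+λ²))sin(λs)sin(√(1+λ²)s) and y1(s)=−sin(λs)cos(√(1+λ²)s)+(λ/√(1+λ²))cos(λs)sin(√(1+λ²)s), while x2(θ,s)=sin(√(1+λ²)s)cos(θ−λs)/√(1+λ²) and y2(θ,s)=sin(√(1+λ²)s)sin(θ−λs)/√(1+λ²). -/

import Mathlib

open Real
open scoped RealInnerProductSpace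

def qi : Quaternion ℝ := ⟨0, 1, 0, 0⟩

/-!
Multiplying by `exp (t • λi)` removes the first-order term of `γ'' + γ + 2λ i γ' = 0`: since
`(λi)² = -λ²`, the product `U t = exp (t • λi) * γ t` solves `U'' = -(1 + λ²) U`, so it is
`cos (μt) U(0) + sin (μt) / μ • U'(0)` with `μ = √(1 + λ²)`, `U(0) = 1`, `U'(0) = λi + γ'(0)`.
Then `γ t = exp (-λt i) * U t`, and `exp (-λt i) = cos (λt) - sin (λt) i` gives the coordinates.
-/

section HarmonicOscillator

variable {E : Type*} [NormedAddCommGroup E] [NormedSpace ℝ E] {μ : ℝ} {u u' : ℝ → E}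

theorem hasDerivAt_cos_smul_sub_sin_smul_of_harmonic (hu : ∀ t, HasDerivAt u (u' t) t)
    (hu' : ∀ t, HasDerivAt u' (-μ ^ 2 • u t) t) (t : ℝ) :
    HasDerivAt (fun t => (μ * cos (μ * t)) • u t - sin (μ * t) • u' t) 0 t := by
  have hc := ((hasDerivAt_id t).const_mul μ).cos.const_mul μ
  have hs := ((hasDerivAt_id t).const_mul μ).sin
  refine ((hc.smul (hu t)).sub (hs.smul (hu' t))).congr_deriv ?_
  match_scalars <;> ring

theorem hasDerivAt_sin_smul_add_cos_smul_of_harmonic (hu : ∀ t, HasDerivAt u (u' t) t)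
    (hu' : ∀ t, HasDerivAt u' (-μ ^ 2 • u t) t) (t : ℝ) :
    HasDerivAt (fun t => (μ * sin (μ * t)) • u t + cos (μ * t) • u' t) 0 t := by
  have hs := ((hasDerivAt_id t).const_mul μ).sin.const_mul μ
  have hc := ((hasDerivAt_id t).const_mul μ).cos
  refine ((hs.smul (hu t)).add (hc.smul (hu' t))).congr_deriv ?_
  match_scalars <;> ring

theorem eq_cos_smul_add_sin_div_smul_of_harmonic (hμ : μ ≠ 0)
    (hu : ∀ t, HasDerivAt u (u' t) t) (hu' : ∀ t, HasDerivAt u' (-μ ^ 2 • u t) t) (t : ℝ) :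
    u t = cos (μ * t) • u 0 + (sin (μ * t) / μ) • u' 0 := by
  have const {f : ℝ → E} (hf : ∀ t, HasDerivAt f 0 t) : f t = f 0 :=
    is_const_of_deriv_eq_zero (fun x => (hf x).differentiableAt) (fun x => (hf x).deriv) t 0
  have h₁ := const (hasDerivAt_cos_smul_sub_sin_smul_of_harmonic hu hu')
  have h₂ := const (hasDerivAt_sin_smul_add_cos_smul_of_harmonic hu hu')
  simp only [mul_zero, cos_zero, sin_zero, mul_one, zero_smul, sub_zero, zero_add, one_smul]
    at h₁ h₂
  apply smul_right_injective E hμ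
  calc μ • u t = cos (μ * t) • ((μ * cos (μ * t)) • u t - sin (μ * t) • u' t)
        + sin (μ * t) • ((μ * sin (μ * t)) • u t + cos (μ * t) • u' t) := by
        match_scalars
        · linear_combination (-μ) * sin_sq_add_cos_sq (μ * t)
        · ring
    _ = μ • (cos (μ * t) • u 0 + (sin (μ * t) / μ) • u' 0) := by
        rw [h₁, h₂]; match_scalars <;> field_simp

end HarmonicOscillator

section ExpConjugation

variable {𝔸 : Type*} [NormedRing 𝔸] [NormedAlgebra ℝ 𝔸] [CompleteSpace 𝔸]

theorem NormedSpace.exp_neg_mul_exp (x : 𝔸) : exp (-x) * exp x = 1 := by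
  have hball (y : 𝔸) : y ∈ Metric.eball (0 : 𝔸) (expSeries ℝ 𝔸).radius :=
    (expSeries_radius_eq_top ℝ 𝔸).symm ▸ edist_lt_top _ _
  rw [← exp_add_of_commute_of_mem_ball (Commute.neg_left (Commute.refl x)) (hball _) (hball x),
    neg_add_cancel, exp_zero]

theorem HasDerivAt.exp_smul_mul (a : 𝔸) {f : ℝ → 𝔸} {f' : 𝔸} {t : ℝ} (hf : HasDerivAt f f' t) :
    HasDerivAt (fun s => NormedSpace.exp (s • a) * f s)
      (NormedSpace.exp (t • a) * (a * f t + f')) t :=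
  ((hasDerivAt_exp_smul_const a t).mul hf).congr_deriv (by rw [mul_add, mul_assoc])

theorem hasDerivAt_exp_smul_mul_of_ode {a : 𝔸} {c : ℝ} {γ γ' γ'' : ℝ → 𝔸}
    (hd1 : ∀ s, HasDerivAt γ (γ' s) s) (hd2 : ∀ s, HasDerivAt γ' (γ'' s) s)
    (heq : ∀ s, γ'' s + γ s + (2 : ℝ) • (a * γ' s) = 0) (ha : a * a = c • 1) (t : ℝ) :
    HasDerivAt (fun s => NormedSpace.exp (s • a) * (a * γ s + γ' s))
      ((c - 1) • (NormedSpace.exp (t • a) * γ t)) t := by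
  refine (((hd1 t).const_mul a).add (hd2 t)).exp_smul_mul a |>.congr_deriv ?_
  have hγ'' : γ'' t = -γ t - (2 : ℝ) • (a * γ' t) := by
    linear_combination (norm := module) heq t
  have hsum : a * (a * γ t + γ' t) + (a * γ' t + γ'' t) = (c - 1) • γ t := by
    rw [hγ'', mul_add, ← mul_assoc, ha, smul_one_mul]
    module
  rw [Pi.add_apply, hsum, mul_smul_comm]

end ExpConjugation

section Quaternion

open Quaternion

@[simp] theorem qi_re : qi.re = 0 := rfl
@[simp] theorem qi_imI : qi.imI = 1 := rfl
@[simp] theorem qi_imJ : qi.imJ = 0 := rfl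
@[simp] theorem qi_imK : qi.imK = 0 := rfl

theorem norm_qi : ‖qi‖ = 1 := by
  rw [norm_eq_sqrt_real_inner, inner_self, normSq_def']
  simp

theorem qi_mul_qi : qi * qi = -1 := by ext <;> simp

theorem exp_smul_qi (x : ℝ) : NormedSpace.exp (x • qi) = ↑(cos x) + sin x • qi := by
  rw [exp_of_re_eq_zero _ (by simp), norm_smul, norm_qi, mul_one, Real.norm_eq_abs]
  have hsin : sin |x| / |x| * x = sin x := by
    rcases eq_or_ne x 0 with rfl | hx
    · simp
    rcases abs_cases x with ⟨habs, -⟩ | ⟨habs, -⟩ <;> simp [habs, hx]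
  ext <;> simp [hsin]

end Quaternion

/-- Coordinates of the geodesic `γ_θ` of curvature `λ` from `p = (1,0,0,0)` with
initial velocity `(0,0,cos θ,sin θ)`: the `x1,y1` coordinates are independent of
`θ`, `x1(s) = cos(λs)cos(√(1+λ²)s) + (λ/√(1+λ²))sin(λs)sin(√(1+λ²)s)`,
`y1(s) = −sin(λs)cos(√(1+λ²)s) + (λ/√(1+λ²))cos(λs)sin(√(1+λ²)s)`, while
`x2(θ,s) = sin(√(1+λ²)s)cos(θ−λs)/√(1+λ²)` and
`y2(θ,s) = sin(√(1+λ²)s)sin(θ−λs)/√(1+λ²)`. -/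
theorem geodesic_coordinates (lam θ : ℝ) (γ γ' γ'' : ℝ → Quaternion ℝ)
    (hγ0 : γ 0 = 1)
    (hγ'0 : γ' 0 = ⟨0, 0, Real.cos θ, Real.sin θ⟩)
    (hd1 : ∀ s, HasDerivAt γ (γ' s) s) (hd2 : ∀ s, HasDerivAt γ' (γ'' s) s)
    (heq : ∀ s, γ'' s + γ s + (2 * lam) • (qi * γ' s) = 0) :
    ∀ s : ℝ,
      (γ s).re = Real.cos (lam * s) * Real.cos (Real.sqrt (1 + lam ^ 2) * s)
        + lam / Real.sqrt (1 + lam ^ 2) * Real.sin (lam * s)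
          * Real.sin (Real.sqrt (1 + lam ^ 2) * s) ∧
      (γ s).imI = -Real.sin (lam * s) * Real.cos (Real.sqrt (1 + lam ^ 2) * s)
        + lam / Real.sqrt (1 + lam ^ 2) * Real.cos (lam * s)
          * Real.sin (Real.sqrt (1 + lam ^ 2) * s) ∧
      (γ s).imJ = Real.sin (Real.sqrt (1 + lam ^ 2) * s)
          * Real.cos (θ - lam * s) / Real.sqrt (1 + lam ^ 2) ∧
      (γ s).imK = Real.sin (Real.sqrt (1 + lam ^ 2) * s)
          * Real.sin (θ - lam * s) / Real.sqrt (1 + lam ^ 2) := by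
  intro s
  set μ := √(1 + lam ^ 2)
  have hμ : μ ≠ 0 := (sqrt_pos.2 (by positivity)).ne'
  set a : Quaternion ℝ := lam • qi
  have ha : a * a = (-lam ^ 2) • 1 := by
    rw [smul_mul_smul_comm, qi_mul_qi, smul_neg, ← neg_smul, sq]
  have hode (t : ℝ) : γ'' t + γ t + (2 : ℝ) • (a * γ' t) = 0 := by
    rw [← heq t, smul_mul_assoc, smul_smul]
  have hU' (t : ℝ) := hasDerivAt_exp_smul_mul_of_ode hd1 hd2 hode ha t
  rw [show -lam ^ 2 - 1 = -μ ^ 2 by rw [sq_sqrt (by positivity)]; ring] at hU'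
  have hU : NormedSpace.exp (s • a) * γ s = cos (μ * s) • 1 + (sin (μ * s) / μ) • (a + γ' 0) := by
    simpa [hγ0] using
      eq_cos_smul_add_sin_div_smul_of_harmonic hμ (fun t => (hd1 t).exp_smul_mul a) hU' s
  have hγ : γ s = NormedSpace.exp ((-(lam * s)) • qi) * NormedSpace.exp (s • a) * γ s := by
    rw [show (-(lam * s)) • qi = -(s • a) by rw [smul_smul, neg_smul, mul_comm],
      NormedSpace.exp_neg_mul_exp, one_mul]
  have hv : (γ' 0).re = 0 ∧ (γ' 0).imI = 0 ∧ (γ' 0).imJ = cos θ ∧ (γ' 0).imK = sin θ := by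
    simp [hγ'0]
  rw [hγ, mul_assoc, hU, exp_smul_qi]
  refine ⟨?_, ?_, ?_, ?_⟩ <;> simp [a, hv, Quaternion.re_one, Quaternion.imI_one, Quaternion.imJ_one,
    Quaternion.imK_one, cos_sub, sin_sub] <;> ring
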